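/- Let E be a vector lattice, D ⊆ E a lateral ideal, F a vector lattice, and T : D → F a positive map that is orthogonally additive on D (T(x + y) = T x + T y whenever x, y ∈ D and x ⊥ y). Then for every x ∈ E the set {T y : y ∈ 𝓕_x ∩ D} is upward directed: for all y, z ∈ 𝓕_x ∩ D there exists v ∈ 𝓕_x ∩ D with T y ≤ T v and T z ≤ T v. -/

import Mathlib

namespace VL

/-- Two elements of a vector lattice are disjoint if `|x| ⊓ |y| = 0`. -/
def VDisjoint {G : Type*} [Lattice G] [AddCommGroup G] (x y : G) : Prop :=
  |x| ⊓ |y| = 0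

/-- `y` is a fragment of `x` if `y ⊥ (x - y)`. -/
def Fragment {G : Type*} [Lattice G] [AddCommGroup G] (y x : G) : Prop :=
  VDisjoint y (x - y)

/-- An order projection: a linear idempotent `π` with `0 ≤ π x ≤ x` for all `x ≥ 0`. -/
def IsOrderProjection {G : Type*} [Lattice G] [AddCommGroup G] [Module ℝ G]
    (π : G →ₗ[ℝ] G) : Prop :=
  (∀ x, π (π x) = π x) ∧ ∀ x : G, 0 ≤ x → 0 ≤ π x ∧ π x ≤ x

/-- A map between the order projections of `E` and of `F` is a Boolean homomorphism if it
maps order projections to order projections and preserves the Boolean operations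
`π ∧ ρ = π ∘ ρ`, `π ∨ ρ = π + ρ - π ∘ ρ` and `compl π = Id - π`. -/
def IsBooleanHom {E F : Type*} [Lattice E] [AddCommGroup E] [Module ℝ E]
    [Lattice F] [AddCommGroup F] [Module ℝ F]
    (Φ : (E →ₗ[ℝ] E) → (F →ₗ[ℝ] F)) : Prop :=
  (∀ π, IsOrderProjection π → IsOrderProjection (Φ π)) ∧
  (∀ π ρ, IsOrderProjection π → IsOrderProjection ρ →
    Φ (π ∘ₗ ρ) = Φ π ∘ₗ Φ ρ) ∧
  (∀ π ρ, IsOrderProjection π → IsOrderProjection ρ →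
    Φ (π + ρ - π ∘ₗ ρ) = Φ π + Φ ρ - Φ π ∘ₗ Φ ρ) ∧
  (∀ π, IsOrderProjection π → Φ (LinearMap.id - π) = LinearMap.id - Φ π)

/-- `T` is atomic subordinate to `Φ` if `T (π x) = Φ(π) (T x)` for every order projection. -/
def IsAtomic {E F : Type*} [Lattice E] [AddCommGroup E] [Module ℝ E]
    [Lattice F] [AddCommGroup F] [Module ℝ F]
    (Φ : (E →ₗ[ℝ] E) → (F →ₗ[ℝ] F)) (T : E → F) : Prop :=
  ∀ π : E →ₗ[ℝ] E, IsOrderProjection π → ∀ x : E, T (π x) = Φ π (T x)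

/-- The principal projection property: for every `x` there is an order projection `π_x`
(the projection onto the band generated by `x`) such that `z - π_x z ⊥ x` for all `z`,
and `π_x z ⊥ w` whenever `w ⊥ x`. -/
def HasPPP (E : Type*) [Lattice E] [AddCommGroup E] [Module ℝ E] : Prop :=
  ∀ x : E, ∃ π : E →ₗ[ℝ] E, IsOrderProjection π ∧
    (∀ z : E, VDisjoint (z - π z) x) ∧
    (∀ z w : E, VDisjoint w x → VDisjoint (π z) w)

/-- Dedekind completeness: every nonempty set bounded above has a supremum. -/
def DedekindComplete (F : Type*) [Lattice F] : Prop :=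
  ∀ S : Set F, S.Nonempty → BddAbove S → ∃ b, IsLUB S b


variable {E F : Type*}
  [Lattice E] [AddCommGroup E] [Module ℝ E]
  [CovariantClass E E (· + ·) (· ≤ ·)] [PosSMulMono ℝ E]
  [Lattice F] [AddCommGroup F] [Module ℝ F]
  [CovariantClass F F (· + ·) (· ≤ ·)] [PosSMulMono ℝ F]

/-- A lateral ideal: closed under fragments and under sums of disjoint elements. -/
def IsLateralIdeal {G : Type*} [Lattice G] [AddCommGroup G] (D : Set G) : Prop :=
  (∀ x ∈ D, ∀ y : G, Fragment y x → y ∈ D) ∧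
  ∀ x ∈ D, ∀ y ∈ D, VDisjoint x y → x + y ∈ D

/-!
For fragments `y, z` of `x`, the element `v = y ∪ z` is again a fragment of `x`, and it splits
as `v = y + (z - z ∩ y)` with `z - z ∩ y` a fragment of `z` disjoint from `y`. Both summands lie
in `D`, so `v ∈ D` and `T v = T y + T (z - z ∩ y) ≥ T y`; by symmetry also `T v ≥ T z`.
All disjointness facts reduce to the positive cone: `y ⊑ x` exactly when `y⁺` is a component
of `x⁺` and `y⁻` one of `x⁻` (`c` is a component of `p` when `c ⊓ (p - c) = 0`), and `x⁺ ⊥ x⁻`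
makes everything below `x⁺` disjoint from everything below `x⁻`.
-/

lemma inf_eq_zero_of_le {α : Type*} [Lattice α] [Zero α] {a b c d : α} (h : a ⊓ b = 0)
    (hc : 0 ≤ c) (hd : 0 ≤ d) (hca : c ≤ a) (hdb : d ≤ b) : c ⊓ d = 0 :=
  le_antisymm ((inf_le_inf hca hdb).trans h.le) (le_inf hc hd)

section LatticeOrderedGroup

variable {G : Type*} [Lattice G] [AddCommGroup G] {a b c d e p n p' n' P N x y z : G}

lemma VDisjoint.symm (h : VDisjoint x y) : VDisjoint y x := by
  rw [VDisjoint, inf_comm]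
  exact h

lemma Fragment.sub (h : Fragment y x) : Fragment (x - y) x := by
  rw [Fragment, sub_sub_cancel]
  exact h.symm

lemma Fragment.neg (h : Fragment y x) : Fragment (-y) (-x) := by
  rw [Fragment, VDisjoint, neg_sub_neg, ← neg_sub, abs_neg, abs_neg]
  exact h

def fragInter (y z : G) : G := (y⁺ ⊓ z⁺) - (y⁻ ⊓ z⁻)

def fragUnion (y z : G) : G := (y⁺ ⊔ z⁺) - (y⁻ ⊔ z⁻)

lemma fragUnion_comm (y z : G) : fragUnion y z = fragUnion z y := by
  simp only [fragUnion, sup_comm]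

variable [AddLeftMono G]

lemma posPart_le_abs (a : G) : a⁺ ≤ |a| := sup_le (le_abs_self a) (abs_nonneg a)

lemma negPart_le_abs (a : G) : a⁻ ≤ |a| := sup_le (neg_le_abs a) (abs_nonneg a)

lemma inf_add_eq_zero (hab : a ⊓ b = 0) (hac : a ⊓ c = 0) : a ⊓ (b + c) = 0 := by
  have hc : 0 ≤ c := hac ▸ inf_le_right
  have hle : a ⊓ (b + c) ≤ c :=
    calc a ⊓ (b + c) ≤ (a + c) ⊓ (b + c) := inf_le_inf_right _ (le_add_of_nonneg_right hc)
      _ = a ⊓ b + c := (inf_add a b c).symm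
      _ = c := by rw [hab, zero_add]
  refine le_antisymm (hac ▸ le_inf inf_le_left hle) (le_inf (hab ▸ inf_le_left) ?_)
  exact add_nonneg (hab ▸ inf_le_right) hc

lemma add_inf_add_eq_zero (hac : a ⊓ c = 0) (had : a ⊓ d = 0) (hbc : b ⊓ c = 0)
    (hbd : b ⊓ d = 0) : (a + b) ⊓ (c + d) = 0 := by
  have hc : (a + b) ⊓ c = 0 := by
    rw [inf_comm, inf_add_eq_zero (by rwa [inf_comm]) (by rwa [inf_comm])]
  have hd : (a + b) ⊓ d = 0 := by
    rw [inf_comm, inf_add_eq_zero (by rwa [inf_comm]) (by rwa [inf_comm])]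
  exact inf_add_eq_zero hc hd

lemma sup_eq_add_of_inf_eq_zero (h : a ⊓ b = 0) : a ⊔ b = a + b := by
  rw [← inf_add_sup a b, h, zero_add]

lemma abs_sub_eq_add_of_inf_eq_zero (h : p ⊓ n = 0) : |p - n| = p + n := by
  rw [← sup_sub_inf_eq_abs_sub, inf_comm, h, sub_zero, sup_comm, sup_eq_add_of_inf_eq_zero h]

lemma posPart_sub_of_inf_eq_zero (h : p ⊓ n = 0) : (p - n)⁺ = p := by
  rw [posPart_def, ← sub_self n, ← sup_sub, sup_eq_add_of_inf_eq_zero h, add_sub_cancel_right]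

lemma vDisjoint_sub_sub (hPN : P ⊓ N = 0) (hpP : p ≤ P) (hnN : n ≤ N) (hp'P : p' ≤ P)
    (hn'N : n' ≤ N) (hpp' : p ⊓ p' = 0) (hnn' : n ⊓ n' = 0) : VDisjoint (p - n) (p' - n') := by
  have hp : 0 ≤ p := hpp' ▸ inf_le_left
  have hp' : 0 ≤ p' := hpp' ▸ inf_le_right
  have hn : 0 ≤ n := hnn' ▸ inf_le_left
  have hn' : 0 ≤ n' := hnn' ▸ inf_le_right
  unfold VDisjoint
  rw [abs_sub_eq_add_of_inf_eq_zero (inf_eq_zero_of_le hPN hp hn hpP hnN),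
    abs_sub_eq_add_of_inf_eq_zero (inf_eq_zero_of_le hPN hp' hn' hp'P hn'N)]
  refine add_inf_add_eq_zero hpp' (inf_eq_zero_of_le hPN hp hn' hpP hn'N) ?_ hnn'
  rw [inf_comm]
  exact inf_eq_zero_of_le hPN hp' hn hp'P hnN

lemma Fragment.posPart_inf (h : Fragment y x) : y⁺ ⊓ (x⁺ - y⁺) = 0 := by
  set w := x - y with hw
  have hyw : |y| ⊓ |w| = 0 := h
  have hdisj {s t : G} (hs : 0 ≤ s) (ht : 0 ≤ t) (hsy : s ≤ |y|) (htw : t ≤ |w|) : s ⊓ t = 0 :=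
    inf_eq_zero_of_le hyw hs ht hsy htw
  have hsplit : (y⁺ + w⁺) ⊓ (y⁻ + w⁻) = 0 :=
    add_inf_add_eq_zero (posPart_inf_negPart_eq_zero y)
      (hdisj (posPart_nonneg y) (negPart_nonneg w) (posPart_le_abs y) (negPart_le_abs w))
      (by rw [inf_comm]; exact
        hdisj (negPart_nonneg y) (posPart_nonneg w) (negPart_le_abs y) (posPart_le_abs w))
      (posPart_inf_negPart_eq_zero w)
  have hx : x = (y⁺ + w⁺) - (y⁻ + w⁻) := by
    rw [add_sub_add_comm, posPart_sub_negPart, posPart_sub_negPart, hw, add_sub_cancel]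
  rw [hx, posPart_sub_of_inf_eq_zero hsplit, add_sub_cancel_left]
  exact hdisj (posPart_nonneg y) (posPart_nonneg w) (posPart_le_abs y) (posPart_le_abs w)

lemma Fragment.negPart_inf (h : Fragment y x) : y⁻ ⊓ (x⁻ - y⁻) = 0 := by
  simpa only [posPart_neg] using h.neg.posPart_inf

lemma Fragment.posPart_le (h : Fragment y x) : y⁺ ≤ x⁺ :=
  sub_nonneg.1 (h.posPart_inf ▸ inf_le_right)

lemma Fragment.negPart_le (h : Fragment y x) : y⁻ ≤ x⁻ :=
  sub_nonneg.1 (h.negPart_inf ▸ inf_le_right)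

lemma fragment_sub_of_inf_eq_zero (hp : p ⊓ (x⁺ - p) = 0) (hn : n ⊓ (x⁻ - n) = 0) :
    Fragment (p - n) x := by
  have hsplit : x - (p - n) = (x⁺ - p) - (x⁻ - n) := by
    conv_lhs => rw [← posPart_sub_negPart x]
    abel
  rw [Fragment, hsplit]
  exact vDisjoint_sub_sub (posPart_inf_negPart_eq_zero x) (sub_nonneg.1 (hp ▸ inf_le_right))
    (sub_nonneg.1 (hn ▸ inf_le_right)) (sub_le_self _ (hp ▸ inf_le_left))
    (sub_le_self _ (hn ▸ inf_le_left)) hp hn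

lemma inf_sub_inf_eq_zero (hd : d ⊓ (p - d) = 0) (hc : c ≤ p) (he : 0 ≤ e) (hed : e ≤ d) :
    e ⊓ (c - c ⊓ d) = 0 := by
  have hle : c - c ⊓ d ≤ p - d := by
    rw [sub_inf]
    exact sup_le ((sub_self c).le.trans (hd ▸ inf_le_right)) (sub_le_sub_right hc d)
  exact inf_eq_zero_of_le hd he (sub_nonneg.2 inf_le_left) hed hle

lemma sup_inf_sub_sup_eq_zero (hc : c ⊓ (p - c) = 0) (hd : d ⊓ (p - d) = 0) :
    (c ⊔ d) ⊓ (p - c ⊔ d) = 0 := by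
  let := AddCommGroup.toDistribLattice G
  rw [sub_sup, inf_sup_right]
  have hcd : 0 ≤ (p - c) ⊓ (p - d) := le_inf (hc ▸ inf_le_right) (hd ▸ inf_le_right)
  rw [inf_eq_zero_of_le hc (hc ▸ inf_le_left) hcd le_rfl inf_le_left,
    inf_eq_zero_of_le hd (hd ▸ inf_le_left) hcd le_rfl inf_le_right, sup_idem]

lemma fragUnion_eq_add_sub_fragInter (y z : G) : fragUnion y z = y + (z - fragInter z y) := by
  have hsup (a b : G) : a ⊔ b = a + b - a ⊓ b := eq_sub_of_add_eq' (inf_add_sup a b)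
  have hparts (a b c d : G) : a ⊔ c - b ⊔ d = (a - b) + ((c - d) - (c ⊓ a - d ⊓ b)) := by
    rw [hsup, hsup, inf_comm c, inf_comm d]
    abel
  rw [fragUnion, fragInter, hparts, posPart_sub_negPart, posPart_sub_negPart]

lemma Fragment.fragUnion (hy : Fragment y x) (hz : Fragment z x) : Fragment (fragUnion y z) x :=
  fragment_sub_of_inf_eq_zero (sup_inf_sub_sup_eq_zero hy.posPart_inf hz.posPart_inf)
    (sup_inf_sub_sup_eq_zero hy.negPart_inf hz.negPart_inf)

lemma Fragment.fragInter_left (hy : Fragment y x) (hz : Fragment z x) :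
    Fragment (fragInter y z) y :=
  fragment_sub_of_inf_eq_zero
    (inf_sub_inf_eq_zero hz.posPart_inf hy.posPart_le
      (le_inf (posPart_nonneg y) (posPart_nonneg z)) inf_le_right)
    (inf_sub_inf_eq_zero hz.negPart_inf hy.negPart_le
      (le_inf (negPart_nonneg y) (negPart_nonneg z)) inf_le_right)

lemma vDisjoint_sub_fragInter (hy : Fragment y x) (hz : Fragment z x) :
    VDisjoint y (z - fragInter z y) := by
  have hsplit : (z⁺ - z⁻) - fragInter z y = (z⁺ - z⁺ ⊓ y⁺) - (z⁻ - z⁻ ⊓ y⁻) := by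
    rw [fragInter]
    abel
  have hdisj := vDisjoint_sub_sub (posPart_inf_negPart_eq_zero x) hy.posPart_le hy.negPart_le
    ((sub_le_self _ (le_inf (posPart_nonneg z) (posPart_nonneg y))).trans hz.posPart_le)
    ((sub_le_self _ (le_inf (negPart_nonneg z) (negPart_nonneg y))).trans hz.negPart_le)
    (inf_sub_inf_eq_zero hy.posPart_inf hz.posPart_le (posPart_nonneg y) le_rfl)
    (inf_sub_inf_eq_zero hy.negPart_inf hz.negPart_le (negPart_nonneg y) le_rfl)
  rwa [← hsplit, posPart_sub_negPart, posPart_sub_negPart] at hdisj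

lemma IsLateralIdeal.fragUnion_mem_and_le {H : Type*} [AddCommMonoid H] [Preorder H]
    [AddLeftMono H] {D : Set G} (hD : IsLateralIdeal D) {T : G → H}
    (hTpos : ∀ x ∈ D, 0 ≤ T x)
    (hToa : ∀ x ∈ D, ∀ y ∈ D, VDisjoint x y → T (x + y) = T x + T y)
    (hy : Fragment y x) (hyD : y ∈ D) (hz : Fragment z x) (hzD : z ∈ D) :
    fragUnion y z ∈ D ∧ T y ≤ T (fragUnion y z) := by
  have hwD : z - fragInter z y ∈ D := hD.1 z hzD _ (hz.fragInter_left hy).sub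
  have hyw : VDisjoint y (z - fragInter z y) := vDisjoint_sub_fragInter hy hz
  rw [fragUnion_eq_add_sub_fragInter, hToa y hyD _ hwD hyw]
  exact ⟨hD.2 y hyD _ hwD hyw, le_add_of_nonneg_right (hTpos _ hwD)⟩

end LatticeOrderedGroup

/-- for a positive, orthogonally additive map on a lateral ideal `D`, the
set `{T y : y ∈ 𝓕ₓ ∩ D}` is upward directed. -/
theorem lateral_ideal_upward_directed
    (D : Set E) (hD : IsLateralIdeal D) (T : E → F)
    (hTpos : ∀ x ∈ D, 0 ≤ T x)
    (hToa : ∀ x ∈ D, ∀ y ∈ D, VDisjoint x y → T (x + y) = T x + T y) :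
    ∀ x y z : E, Fragment y x → y ∈ D → Fragment z x → z ∈ D →
      ∃ v : E, Fragment v x ∧ v ∈ D ∧ T y ≤ T v ∧ T z ≤ T v := by
  intro x y z hy hyD hz hzD
  obtain ⟨hvD, hyv⟩ := hD.fragUnion_mem_and_le hTpos hToa hy hyD hz hzD
  obtain ⟨-, hzv⟩ := hD.fragUnion_mem_and_le hTpos hToa hz hzD hy hyD
  exact ⟨fragUnion y z, hy.fragUnion hz, hvD, hyv, fragUnion_comm z y ▸ hzv⟩

end VL
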